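/- arXiv:2205.04117 — 2 statements merged into one kernel-verified Lean document; each statement's English description precedes it below -/
import Mathlib

section
/- Let a > 0 and b ≥ 0 be real numbers, and let F₂ : ℕ → ℝ be a nonnegative function such that there exists C > 0 with F₂(j) ≤ C·exp(b·j) for all j ∈ ℕ. Then the function F₃ defined for t > 0 by F₃(t) = Σ_{j=0}^∞ F₂(j)·exp(−a·j²/t) satisfies F₃(t) = O(t^{1/2} · exp(b²·t/(4a))) as t → ∞. -/
/-!
Completing the square gives `F₂ j * exp (-a j² / t) ≤ C exp (b² t / (4a)) exp (-α (j - m)²)`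
with `α = a / t` and `m = b t / (2a)`. A Gaussian sampled at the integers sums to at most
`3 + √(π / α)` whatever its centre `m`: after shifting by `⌊m⌋`, the terms on either side of the
peak are dominated by those of the centred Gaussian on `ℕ`, whose sum the integral test bounds by
`1 + √(π / α) / 2`. Since `√(π / α) = √(π / a) √t`, the sum is `O(√t exp (b² t / (4a)))`.
-/

open Real Filter

section GaussianSums

variable {α : ℝ}

lemma antitoneOn_exp_neg_mul_sq (hα : 0 < α) :
    AntitoneOn (fun x : ℝ => exp (-α * x ^ 2)) (Set.Ici 0) := by
  intro x hx y _ hxy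
  have := pow_le_pow_left₀ hx hxy 2
  simp only [exp_le_exp]
  nlinarith

lemma summable_exp_neg_mul_sq_nat (hα : 0 < α) :
    Summable fun k : ℕ => exp (-α * (k : ℝ) ^ 2) :=
  (antitoneOn_exp_neg_mul_sq hα).summable_of_integrableOn_Ioi_zero
    (integrable_exp_neg_mul_sq hα).integrableOn fun _ _ => (exp_pos _).le

lemma tsum_exp_neg_mul_sq_nat_le (hα : 0 < α) :
    ∑' k : ℕ, exp (-α * (k : ℝ) ^ 2) ≤ 1 + √(π / α) / 2 := by
  refine ((antitoneOn_exp_neg_mul_sq hα).tsum_le_integral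
    (integrable_exp_neg_mul_sq hα).integrableOn fun _ _ => (exp_pos _).le).trans_eq ?_
  rw [integral_gaussian_Ioi]
  norm_num

lemma exp_neg_mul_sq_le_of_le_abs (hα : 0 < α) {x y : ℝ} (hx : 0 ≤ x) (hxy : x ≤ |y|) :
    exp (-α * y ^ 2) ≤ exp (-α * x ^ 2) := by
  have := pow_le_pow_left₀ hx hxy 2
  rw [sq_abs] at this
  simp only [exp_le_exp]
  nlinarith

lemma exp_neg_mul_sq_sub_le (hα : 0 < α) {θ : ℝ} (hθ : θ ∈ Set.Icc (0 : ℝ) 1) (k : ℕ) :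
    exp (-α * (((k + 1 : ℕ) : ℤ) - θ) ^ 2) ≤ exp (-α * (k : ℝ) ^ 2) ∧
      exp (-α * ((-(k + 1 : ℤ) : ℤ) - θ) ^ 2) ≤ exp (-α * (k : ℝ) ^ 2) := by
  obtain ⟨hθ0, hθ1⟩ := hθ
  have hk : (0 : ℝ) ≤ k := k.cast_nonneg
  constructor <;> refine exp_neg_mul_sq_le_of_le_abs hα hk ?_ <;> push_cast
  · exact (by linarith : (k : ℝ) ≤ k + 1 - θ).trans (le_abs_self _)
  · exact (by linarith : (k : ℝ) ≤ -(-(k + 1) - θ)).trans (neg_le_abs _)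

lemma summable_exp_neg_mul_sq_sub_int_of_mem_Icc (hα : 0 < α) {θ : ℝ}
    (hθ : θ ∈ Set.Icc (0 : ℝ) 1) :
    Summable fun n : ℤ => exp (-α * (n - θ) ^ 2) := by
  have hS := summable_exp_neg_mul_sq_nat hα
  refine .of_nat_of_neg_add_one ?_ ?_
  · rw [← summable_nat_add_iff 1]
    exact hS.of_nonneg_of_le (fun _ => (exp_pos _).le) fun k => (exp_neg_mul_sq_sub_le hα hθ k).1
  · exact hS.of_nonneg_of_le (fun _ => (exp_pos _).le) fun k => (exp_neg_mul_sq_sub_le hα hθ k).2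

lemma tsum_exp_neg_mul_sq_sub_int_le_of_mem_Icc (hα : 0 < α) {θ : ℝ}
    (hθ : θ ∈ Set.Icc (0 : ℝ) 1) :
    ∑' n : ℤ, exp (-α * (n - θ) ^ 2) ≤ 1 + 2 * ∑' k : ℕ, exp (-α * (k : ℝ) ^ 2) := by
  have hS := summable_exp_neg_mul_sq_nat hα
  have hpos : Summable fun k : ℕ => exp (-α * (((k + 1 : ℕ) : ℤ) - θ) ^ 2) :=
    hS.of_nonneg_of_le (fun _ => (exp_pos _).le) fun k => (exp_neg_mul_sq_sub_le hα hθ k).1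
  have hneg : Summable fun k : ℕ => exp (-α * ((-(k + 1 : ℤ) : ℤ) - θ) ^ 2) :=
    hS.of_nonneg_of_le (fun _ => (exp_pos _).le) fun k => (exp_neg_mul_sq_sub_le hα hθ k).2
  have hnat : Summable fun k : ℕ => exp (-α * ((k : ℤ) - θ) ^ 2) :=
    (summable_nat_add_iff 1).1 hpos
  rw [tsum_of_nat_of_neg_add_one (f := fun n : ℤ => exp (-α * (n - θ) ^ 2)) hnat hneg,
    hnat.tsum_eq_zero_add]
  have h0 : exp (-α * (((0 : ℕ) : ℤ) - θ) ^ 2) ≤ 1 :=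
    exp_le_one_iff.2 (by nlinarith [sq_nonneg (((0 : ℕ) : ℤ) - θ : ℝ)])
  have hpos_le := hpos.tsum_le_tsum (fun k => (exp_neg_mul_sq_sub_le hα hθ k).1) hS
  have hneg_le := hneg.tsum_le_tsum (fun k => (exp_neg_mul_sq_sub_le hα hθ k).2) hS
  linarith

lemma comp_addRight_floor_exp_neg_mul_sq_sub (m : ℝ) :
    ((fun n : ℤ => exp (-α * (n - m) ^ 2)) ∘ Equiv.addRight ⌊m⌋) =
      fun n : ℤ => exp (-α * (n - Int.fract m) ^ 2) := by
  ext n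
  simp only [Function.comp_apply, Equiv.coe_addRight, Int.cast_add, Int.fract]
  ring_nf

lemma summable_exp_neg_mul_sq_sub_int (hα : 0 < α) (m : ℝ) :
    Summable fun n : ℤ => exp (-α * (n - m) ^ 2) := by
  rw [← (Equiv.addRight ⌊m⌋).summable_iff, comp_addRight_floor_exp_neg_mul_sq_sub]
  exact summable_exp_neg_mul_sq_sub_int_of_mem_Icc hα
    ⟨Int.fract_nonneg m, (Int.fract_lt_one m).le⟩

lemma tsum_exp_neg_mul_sq_sub_int_le (hα : 0 < α) (m : ℝ) :
    ∑' n : ℤ, exp (-α * (n - m) ^ 2) ≤ 1 + 2 * ∑' k : ℕ, exp (-α * (k : ℝ) ^ 2) := by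
  rw [← (Equiv.addRight ⌊m⌋).tsum_eq, ← Function.comp_def (fun n : ℤ => exp (-α * (n - m) ^ 2)),
    comp_addRight_floor_exp_neg_mul_sq_sub]
  exact tsum_exp_neg_mul_sq_sub_int_le_of_mem_Icc hα
    ⟨Int.fract_nonneg m, (Int.fract_lt_one m).le⟩

lemma summable_exp_neg_mul_sq_sub_nat (hα : 0 < α) (m : ℝ) :
    Summable fun j : ℕ => exp (-α * (j - m) ^ 2) := by
  have hℕℤ := (summable_exp_neg_mul_sq_sub_int hα m).comp_injective Nat.cast_injective
  simpa only [Function.comp_def, Int.cast_natCast] using hℕℤ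

lemma tsum_exp_neg_mul_sq_sub_nat_le (hα : 0 < α) (m : ℝ) :
    ∑' j : ℕ, exp (-α * (j - m) ^ 2) ≤ 3 + √(π / α) := by
  have hℕℤ := tsum_comp_le_tsum_of_inj (summable_exp_neg_mul_sq_sub_int hα m)
    (fun _ => (exp_pos _).le) Nat.cast_injective
  simp only [Function.comp_def, Int.cast_natCast] at hℕℤ
  linarith [tsum_exp_neg_mul_sq_sub_int_le hα m, tsum_exp_neg_mul_sq_nat_le hα]

end GaussianSums

section GaussianWeightedSums

variable {F : ℕ → ℝ} {b C α : ℝ}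

lemma mul_exp_neg_mul_sq_le (hα : 0 < α) (hFC : ∀ j, F j ≤ C * exp (b * j)) (j : ℕ) :
    F j * exp (-α * (j : ℝ) ^ 2) ≤
      C * exp (b ^ 2 / (4 * α)) * exp (-α * (j - b / (2 * α)) ^ 2) := by
  have hsq : b * j + -α * (j : ℝ) ^ 2 = b ^ 2 / (4 * α) + -α * (j - b / (2 * α)) ^ 2 := by
    field_simp
    ring
  calc F j * exp (-α * (j : ℝ) ^ 2) ≤ C * exp (b * j) * exp (-α * (j : ℝ) ^ 2) :=
        mul_le_mul_of_nonneg_right (hFC j) (exp_pos _).le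
    _ = _ := by rw [mul_assoc, mul_assoc, ← exp_add, ← exp_add, hsq]

lemma summable_mul_exp_neg_mul_sq (hα : 0 < α) (hF : ∀ j, 0 ≤ F j)
    (hFC : ∀ j, F j ≤ C * exp (b * j)) :
    Summable fun j : ℕ => F j * exp (-α * (j : ℝ) ^ 2) :=
  ((summable_exp_neg_mul_sq_sub_nat hα _).mul_left _).of_nonneg_of_le
    (fun j => mul_nonneg (hF j) (exp_pos _).le) (mul_exp_neg_mul_sq_le hα hFC)

lemma tsum_mul_exp_neg_mul_sq_le (hα : 0 < α) (hF : ∀ j, 0 ≤ F j)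
    (hFC : ∀ j, F j ≤ C * exp (b * j)) :
    ∑' j : ℕ, F j * exp (-α * (j : ℝ) ^ 2) ≤ C * exp (b ^ 2 / (4 * α)) * (3 + √(π / α)) := by
  have hC : 0 ≤ C := by simpa using (hF 0).trans (hFC 0)
  calc ∑' j : ℕ, F j * exp (-α * (j : ℝ) ^ 2)
      ≤ ∑' j : ℕ, C * exp (b ^ 2 / (4 * α)) * exp (-α * (j - b / (2 * α)) ^ 2) :=
        (summable_mul_exp_neg_mul_sq hα hF hFC).tsum_le_tsum (mul_exp_neg_mul_sq_le hα hFC)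
          ((summable_exp_neg_mul_sq_sub_nat hα _).mul_left _)
    _ = C * exp (b ^ 2 / (4 * α)) * ∑' j : ℕ, exp (-α * (j - b / (2 * α)) ^ 2) := tsum_mul_left
    _ ≤ C * exp (b ^ 2 / (4 * α)) * (3 + √(π / α)) := by
        gcongr
        exact tsum_exp_neg_mul_sq_sub_nat_le hα _

end GaussianWeightedSums

theorem stmt_3_general (a b : ℝ) (ha : 0 < a) (F₂ : ℕ → ℝ)
    (hF₂ : ∀ j, 0 ≤ F₂ j)
    (hbound : ∃ C > 0, ∀ j : ℕ, F₂ j ≤ C * Real.exp (b * (j : ℝ))) :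
    (∀ t : ℝ, 0 < t → Summable fun j : ℕ => F₂ j * Real.exp (-a * (j : ℝ) ^ 2 / t)) ∧
    (fun t : ℝ => ∑' j : ℕ, F₂ j * Real.exp (-a * (j : ℝ) ^ 2 / t)) =O[atTop]
      fun t : ℝ => t ^ ((1 : ℝ) / 2) * Real.exp (b ^ 2 * t / (4 * a)) := by
  obtain ⟨C, hC, hFC⟩ := hbound
  have hexp (t : ℝ) (j : ℕ) : -a * (j : ℝ) ^ 2 / t = -(a / t) * (j : ℝ) ^ 2 := by ring
  simp only [hexp]
  refine ⟨fun t ht => summable_mul_exp_neg_mul_sq (div_pos ha ht) hF₂ hFC, ?_⟩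
  refine Asymptotics.IsBigO.of_bound (C * (3 + √(π / a))) ?_
  filter_upwards [eventually_ge_atTop 1] with t ht
  have ht0 : 0 < t := by linarith
  have hsqrt_t : 1 ≤ √t := one_le_sqrt.2 ht
  have hsqrt : √(π / (a / t)) = √(π / a) * √t := by
    rw [div_div_eq_mul_div, mul_div_right_comm, sqrt_mul (by positivity)]
  have hquad : b ^ 2 / (4 * (a / t)) = b ^ 2 * t / (4 * a) := by field_simp
  rw [norm_of_nonneg (tsum_nonneg fun j => mul_nonneg (hF₂ j) (exp_pos _).le),
    norm_of_nonneg (by positivity), ← sqrt_eq_rpow]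
  calc _ ≤ C * exp (b ^ 2 / (4 * (a / t))) * (3 + √(π / (a / t))) :=
        tsum_mul_exp_neg_mul_sq_le (div_pos ha ht0) hF₂ hFC
    _ ≤ C * exp (b ^ 2 * t / (4 * a)) * (3 * √t + √(π / a) * √t) := by
        rw [hquad, hsqrt]
        gcongr
        linarith
    _ = C * (3 + √(π / a)) * (√t * exp (b ^ 2 * t / (4 * a))) := by ring

theorem stmt_3 (a b : ℝ) (ha : 0 < a) (hb : 0 ≤ b) (F₂ : ℕ → ℝ)
    (hF₂ : ∀ j, 0 ≤ F₂ j)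
    (hbound : ∃ C > 0, ∀ j : ℕ, F₂ j ≤ C * Real.exp (b * (j : ℝ))) :
    (∀ t : ℝ, 0 < t → Summable fun j : ℕ => F₂ j * Real.exp (-a * (j : ℝ) ^ 2 / t)) ∧
    (fun t : ℝ => ∑' j : ℕ, F₂ j * Real.exp (-a * (j : ℝ) ^ 2 / t)) =O[atTop]
      fun t : ℝ => t ^ ((1 : ℝ) / 2) * Real.exp (b ^ 2 * t / (4 * a)) :=
  stmt_3_general a b ha F₂ hF₂ hbound
end

section
/- Let σ > 0 and let x ∈ ℝ with sin(x/2) ≠ 0. The real-variable function s ↦ Γ(s − 1/2) · ( cos(x)·σ^{1/2−s} − (σ + 1/2)^{1/2−s} ) · (Γ(s))⁻¹ / (4·√(2π)·sin(x/2)²) is differentiable at s = 0 with derivative equal to ( √(σ + 1/2) − cos(x)·√σ ) / ( 2·√2·sin(x/2)² ). (This computes −2·log T_g(σ) for the equivariant analytic torsion of 3-dimensional hyperbolic space at a regular elliptic rotation g through angle x; letting σ → 0 yields T_g = exp(−1/(8·sin(x/2)²)).) -/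
/-!
Since `1/Γ` vanishes at `0` with derivative `1` (because `1/Γ(s) = s/Γ(s+1)`), the derivative at
`0` of `s ↦ f(s)/Γ(s)` is `f(0)` for any `f` differentiable at `0`. Here
`f(0) = Γ(-1/2)(cos x · √σ - √(σ + 1/2))` with `Γ(-1/2) = -2√π`.
-/

open Real

namespace Real

theorem inv_Gamma_eq_mul_inv_Gamma_add_one (s : ℝ) : (Gamma s)⁻¹ = s * (Gamma (s + 1))⁻¹ := by
  rcases eq_or_ne s 0 with rfl | hs
  · simp [Gamma_zero]
  · rw [Gamma_add_one hs, mul_inv, ← mul_assoc, mul_inv_cancel₀ hs, one_mul]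

theorem hasDerivAt_inv_Gamma_zero : HasDerivAt (fun s => (Gamma s)⁻¹) 1 0 := by
  have hΓ : DifferentiableAt ℝ (fun s => Gamma (s + 1)) 0 :=
    (differentiableAt_Gamma fun m => by linarith [m.cast_nonneg (α := ℝ)]).comp 0
      (differentiableAt_id.add_const 1)
  have hinv : DifferentiableAt ℝ (fun s => (Gamma (s + 1))⁻¹) 0 :=
    hΓ.inv (by simp [Gamma_one])
  rw [funext inv_Gamma_eq_mul_inv_Gamma_add_one]
  simpa [Gamma_one] using (hasDerivAt_id' (x := 0)).fun_mul hinv.hasDerivAt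

theorem hasDerivAt_mul_inv_Gamma_zero {f : ℝ → ℝ} (hf : DifferentiableAt ℝ f 0) :
    HasDerivAt (fun s => f s * (Gamma s)⁻¹) (f 0) 0 := by
  simpa [Gamma_zero] using hf.hasDerivAt.fun_mul hasDerivAt_inv_Gamma_zero

theorem Gamma_neg_one_half : Gamma (-1 / 2) = -2 * √π := by
  have h := Gamma_add_one (s := -1 / 2) (by norm_num)
  rw [show (-1 / 2 : ℝ) + 1 = 1 / 2 by norm_num, Gamma_one_half_eq] at h
  linarith

end Real

theorem stmt_16 (σ x : ℝ) (hσ : 0 < σ) (hx : Real.sin (x / 2) ≠ 0) :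
    HasDerivAt (fun s : ℝ =>
        Real.Gamma (s - 1/2) * (Real.cos x * σ ^ (1/2 - s) - (σ + 1/2) ^ (1/2 - s)) *
          (Real.Gamma s)⁻¹ / (4 * Real.sqrt (2 * π) * Real.sin (x / 2) ^ 2))
      ((Real.sqrt (σ + 1/2) - Real.cos x * Real.sqrt σ) /
        (2 * Real.sqrt 2 * Real.sin (x / 2) ^ 2)) 0 := by
  have hΓ : DifferentiableAt ℝ (fun s : ℝ => Gamma (s - 1/2)) 0 := by
    refine (differentiableAt_Gamma fun m hm => ?_).comp 0 (differentiableAt_id.sub_const _)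
    have h : 2 * m = 1 := by exact_mod_cast (by linarith : (2 * m : ℝ) = 1)
    omega
  have hpow : DifferentiableAt ℝ
      (fun s : ℝ => Real.cos x * σ ^ (1/2 - s) - (σ + 1/2) ^ (1/2 - s)) 0 := by
    fun_prop (disch := positivity)
  refine ((hasDerivAt_mul_inv_Gamma_zero (hΓ.fun_mul hpow)).div_const _).congr_deriv ?_
  rw [sub_zero, show (0 : ℝ) - 1 / 2 = -1 / 2 by norm_num, Gamma_neg_one_half,
    ← sqrt_eq_rpow, ← sqrt_eq_rpow, sqrt_mul zero_le_two]
  have hπ : 0 < √π := Real.sqrt_pos.2 pi_pos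
  field_simp
  ring
end
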